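/- arXiv:2406.09300 — 3 statements merged into one kernel-verified Lean document; each statement's English description precedes it below -/
import Mathlib

section
/- The inverse rule ∨⁻¹ is height-preserving admissible in nK + ♦_{kX} + cut: if there is a proof π of Γ{A ∨ B}, then there is a proof π' of Γ{A, B} with h(π') ≤ h(π). -/
/-! Formulas of modal logic in negation normal form. -/
inductive Formula : Type
  | pos : ℕ → Formula
  | neg : ℕ → Formula
  | and : Formula → Formula → Formula
  | or : Formula → Formula → Formula
  | box : Formula → Formula
  | dia : Formula → Formula
  deriving DecidableEq

namespace Formula

/-- Negation by de Morgan duality. -/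
def negf : Formula → Formula
  | pos p => neg p
  | neg p => pos p
  | and A B => or A.negf B.negf
  | or A B => and A.negf B.negf
  | box A => dia A.negf
  | dia A => box A.negf

/-- The (modal) degree of a formula. -/
def deg : Formula → ℕ
  | pos _ => 0
  | neg _ => 0
  | and A B => A.deg + B.deg
  | or A B => A.deg + B.deg
  | box A => A.deg + 1
  | dia A => A.deg + 1

/-- Implication `A ⊃ B := Ā ∨ B`. -/
def impl (A B : Formula) : Formula := or A.negf B

def bot : Formula := and (pos 0) (neg 0)

/-- `♦ⁿ A`. -/
def diaIter : ℕ → Formula → Formula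
  | 0, A => A
  | n+1, A => dia (diaIter n A)

end Formula

/-- Nested sequents: finite multisets of formulas and boxed sequents,
represented as list-like trees considered up to permutation (`NSeq.Perm`). -/
inductive NSeq : Type
  | nil : NSeq
  | fcons : Formula → NSeq → NSeq
  | bcons : NSeq → NSeq → NSeq

namespace NSeq

/-- Multiset union of nested sequents. -/
def append : NSeq → NSeq → NSeq
  | nil, Δ => Δ
  | fcons A Γ, Δ => fcons A (Γ.append Δ)
  | bcons B Γ, Δ => bcons B (Γ.append Δ)

/-- Multiset-like equivalence of nested sequents (hereditary permutation). -/
inductive Perm : NSeq → NSeq → Prop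
  | nil : Perm nil nil
  | fcons (A : Formula) {Γ Δ : NSeq} : Perm Γ Δ → Perm (fcons A Γ) (fcons A Δ)
  | bcons {B B' Γ Δ : NSeq} : Perm B B' → Perm Γ Δ → Perm (bcons B Γ) (bcons B' Δ)
  | swapff (A B : Formula) (Γ : NSeq) : Perm (fcons A (fcons B Γ)) (fcons B (fcons A Γ))
  | swapfb (A : Formula) (B Γ : NSeq) : Perm (fcons A (bcons B Γ)) (bcons B (fcons A Γ))
  | swapbf (A : Formula) (B Γ : NSeq) : Perm (bcons B (fcons A Γ)) (fcons A (bcons B Γ))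
  | swapbb (B C Γ : NSeq) : Perm (bcons B (bcons C Γ)) (bcons C (bcons B Γ))
  | trans {Γ Δ Θ : NSeq} : Perm Γ Δ → Perm Δ Θ → Perm Γ Θ

/-- The corresponding formula of a nested sequent. -/
def form : NSeq → Formula
  | nil => Formula.bot
  | fcons A Γ => Formula.or A Γ.form
  | bcons B Γ => Formula.or Γ.form (Formula.box B.form)

end NSeq

/-- Contexts: nested sequents with a single hole. -/
inductive Ctx : Type
  | hole : Ctx
  | fcons : Formula → Ctx → Ctx
  | scons : NSeq → Ctx → Ctx
  | binto : Ctx → NSeq → Ctx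

namespace Ctx

/-- Filling the hole of a context with a nested sequent. -/
def fill : Ctx → NSeq → NSeq
  | hole, Δ => Δ
  | fcons A C, Δ => NSeq.fcons A (C.fill Δ)
  | scons S C, Δ => NSeq.bcons S (C.fill Δ)
  | binto C S, Δ => NSeq.bcons (C.fill Δ) S

/-- The depth of a context. -/
def depth : Ctx → ℕ
  | hole => 0
  | fcons _ C => C.depth
  | scons _ C => C.depth
  | binto C _ => C.depth + 1

end Ctx

/-- `nestBox [Δ₁, …, Δₖ] Θ = [Δ₁, [Δ₂, [ … , [Δₖ, Θ'] … ]]]` where the innermost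
box contains `Δₖ` together with the box `[Θ]`; i.e. a chain of `k+1` nested boxes
whose `i`-th box contains `Δᵢ` and whose innermost box is `[Θ]`. -/
def nestBox : List NSeq → NSeq → NSeq
  | [], Θ => NSeq.bcons Θ NSeq.nil
  | Δ :: rest, Θ => NSeq.bcons (Δ.append (nestBox rest Θ)) NSeq.nil

/-- `iterBox n Δ`: `n` nested boxes around `Δ`. -/
def iterBox : ℕ → NSeq → NSeq
  | 0, Δ => Δ
  | n+1, Δ => NSeq.bcons (iterBox n Δ) NSeq.nil

/-- Proofs in the nested sequent system `nK` extended with the propagation rules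
`♦ₖₙ` for `n ∈ Xk`, the propagation rules `♦₄ₙ` for `n ∈ X4`, and the cut rule
restricted to cut formulas whose degree satisfies `ρ`.  The index `h` is an upper
bound on the height of the proof. -/
inductive Prf (Xk X4 : Set ℕ) (ρ : ℕ → Prop) : ℕ → NSeq → Prop
  | id (Γ : Ctx) (p : ℕ) (h : ℕ) :
      Prf Xk X4 ρ h (Γ.fill (NSeq.fcons (.pos p) (NSeq.fcons (.neg p) NSeq.nil)))
  | orR {h : ℕ} (Γ : Ctx) (A B : Formula) :
      Prf Xk X4 ρ h (Γ.fill (NSeq.fcons A (NSeq.fcons B NSeq.nil))) →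
      Prf Xk X4 ρ (h+1) (Γ.fill (NSeq.fcons (.or A B) NSeq.nil))
  | andR {h : ℕ} (Γ : Ctx) (A B : Formula) :
      Prf Xk X4 ρ h (Γ.fill (NSeq.fcons A NSeq.nil)) →
      Prf Xk X4 ρ h (Γ.fill (NSeq.fcons B NSeq.nil)) →
      Prf Xk X4 ρ (h+1) (Γ.fill (NSeq.fcons (.and A B) NSeq.nil))
  | boxR {h : ℕ} (Γ : Ctx) (A : Formula) :
      Prf Xk X4 ρ h (Γ.fill (NSeq.bcons (NSeq.fcons A NSeq.nil) NSeq.nil)) →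
      Prf Xk X4 ρ (h+1) (Γ.fill (NSeq.fcons (.box A) NSeq.nil))
  | diaR {h : ℕ} (Γ : Ctx) (A : Formula) (Δ : NSeq) :
      Prf Xk X4 ρ h (Γ.fill (NSeq.fcons (.dia A) (NSeq.bcons (NSeq.fcons A Δ) NSeq.nil))) →
      Prf Xk X4 ρ (h+1) (Γ.fill (NSeq.fcons (.dia A) (NSeq.bcons Δ NSeq.nil)))
  | propk {h : ℕ} (Γ : Ctx) (A : Formula) (Δs : List NSeq) (Δn : NSeq)
      (hn : Δs.length + 1 ∈ Xk) :
      Prf Xk X4 ρ h (Γ.fill (NSeq.fcons (.dia A) (nestBox Δs (NSeq.fcons A Δn)))) →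
      Prf Xk X4 ρ (h+1) (Γ.fill (NSeq.fcons (.dia A) (nestBox Δs Δn)))
  | prop4 {h : ℕ} (Γ : Ctx) (A : Formula) (Δs : List NSeq) (Δl : NSeq)
      (hn : Δs.length + 2 ∈ X4) :
      Prf Xk X4 ρ h (Γ.fill (NSeq.fcons (.dia A) (nestBox Δs (NSeq.fcons (.dia A) Δl)))) →
      Prf Xk X4 ρ (h+1) (Γ.fill (NSeq.fcons (.dia A) (nestBox Δs Δl)))
  | cut {h : ℕ} (Γ : Ctx) (A : Formula) (hA : ρ A.deg) :
      Prf Xk X4 ρ h (Γ.fill (NSeq.fcons A NSeq.nil)) →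
      Prf Xk X4 ρ h (Γ.fill (NSeq.fcons A.negf NSeq.nil)) →
      Prf Xk X4 ρ (h+1) (Γ.fill NSeq.nil)
  | exch {h : ℕ} {Γ Δ : NSeq} : NSeq.Perm Γ Δ → Prf Xk X4 ρ h Γ → Prf Xk X4 ρ h Δ

/-- No cut formula allowed: the cut-free system. -/
def cutFree : ℕ → Prop := fun _ => False

/-- Unrestricted cut. -/
def cutAll : ℕ → Prop := fun _ => True

/-- Provability (some proof of some height). -/
def Provable (Xk X4 : Set ℕ) (ρ : ℕ → Prop) (Γ : NSeq) : Prop := ∃ h, Prf Xk X4 ρ h Γ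

/-- Hilbert-style provability in `K + 4^X`: classical propositional logic,
axiom k, modus ponens, necessitation, and quasi-transitivity `♦ⁿA ⊃ ♦A` for `n ∈ X`. -/
inductive KProv (X : Set ℕ) : Formula → Prop
  | ax1 (A B : Formula) : KProv X (A.impl (B.impl A))
  | ax2 (A B C : Formula) : KProv X ((A.impl B).impl ((A.impl (B.impl C)).impl (A.impl C)))
  | andI (A B : Formula) : KProv X (A.impl (B.impl (A.and B)))
  | andE1 (A B : Formula) : KProv X ((A.and B).impl A)
  | andE2 (A B : Formula) : KProv X ((A.and B).impl B)
  | orI1 (A B : Formula) : KProv X (A.impl (A.or B))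
  | orI2 (A B : Formula) : KProv X (B.impl (A.or B))
  | orE (A B C : Formula) : KProv X ((A.impl C).impl ((B.impl C).impl ((A.or B).impl C)))
  | negI (A B : Formula) : KProv X ((A.impl B).impl ((A.impl B.negf).impl A.negf))
  | negE (A : Formula) : KProv X (A.negf.negf.impl A)
  | axK (A B : Formula) :
      KProv X ((Formula.box (A.impl B)).impl ((Formula.box A).impl (Formula.box B)))
  | mp {A B : Formula} : KProv X (A.impl B) → KProv X A → KProv X B
  | nec {A : Formula} : KProv X A → KProv X (Formula.box A)
  | path {n : ℕ} (hn : n ∈ X) (A : Formula) :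
      KProv X ((Formula.diaIter n A).impl (Formula.dia A))

/-- The approximations `X_p` of the completion of `X`. -/
def compStep (X : Set ℕ) : ℕ → Set ℕ
  | 0 => X
  | p+1 => compStep X p ∪ {k | ∃ m n, m ∈ compStep X p ∧ n ∈ compStep X p ∧ k = m + n - 1}

/-- The completion `X̂` of `X`. -/
def completion (X : Set ℕ) : Set ℕ := ⋃ p, compStep X p

/-! The proof shows more: splitting any collection of occurrences of `A ∨ B`, at any depth,
into `A, B` preserves provability at the same height. This relation is a congruence on nested
sequents, so it can be pushed through the context of every rule instance and commutes with
permutation; the only rule it does not simply commute with is `∨` applied to a split occurrence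
of `A ∨ B` itself, and there the premise, of smaller height, already proves the split sequent. -/

namespace NSeq

theorem Perm.refl : ∀ Γ : NSeq, Perm Γ Γ
  | .nil => .nil
  | .fcons F Γ => .fcons F (Perm.refl Γ)
  | .bcons S Γ => .bcons (Perm.refl S) (Perm.refl Γ)

theorem Perm.append_left : ∀ (Γ : NSeq) {Δ Δ' : NSeq}, Perm Δ Δ' →
    Perm (Γ.append Δ) (Γ.append Δ')
  | .nil, _, _, h => h
  | .fcons F Γ, _, _, h => .fcons F (Perm.append_left Γ h)
  | .bcons S Γ, _, _, h => .bcons (Perm.refl S) (Perm.append_left Γ h)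

theorem perm_middle_fcons (P : Formula) : ∀ Γ Δ : NSeq,
    Perm (fcons P (Γ.append Δ)) (Γ.append (fcons P Δ))
  | nil, _ => Perm.refl _
  | fcons Q Γ, Δ => .trans (.swapff P Q _) (.fcons Q (perm_middle_fcons P Γ Δ))
  | bcons S Γ, Δ => .trans (.swapfb P S _) (.bcons (Perm.refl S) (perm_middle_fcons P Γ Δ))

theorem perm_middle_bcons (S : NSeq) : ∀ Γ Δ : NSeq,
    Perm (bcons S (Γ.append Δ)) (Γ.append (bcons S Δ))
  | nil, _ => Perm.refl _
  | fcons Q Γ, Δ => .trans (.swapbf Q S _) (.fcons Q (perm_middle_bcons S Γ Δ))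
  | bcons T Γ, Δ => .trans (.swapbb S T _) (.bcons (Perm.refl T) (perm_middle_bcons S Γ Δ))

theorem perm_append_left_comm : ∀ Γ₁ Γ₂ Δ : NSeq,
    Perm (Γ₁.append (Γ₂.append Δ)) (Γ₂.append (Γ₁.append Δ))
  | nil, _, _ => Perm.refl _
  | fcons P Γ₁, Γ₂, Δ =>
      .trans (.fcons P (perm_append_left_comm Γ₁ Γ₂ Δ)) (perm_middle_fcons P Γ₂ _)
  | bcons S Γ₁, Γ₂, Δ =>
      .trans (.bcons (Perm.refl S) (perm_append_left_comm Γ₁ Γ₂ Δ)) (perm_middle_bcons S Γ₂ _)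

end NSeq

open NSeq

inductive OrSplit (A B : Formula) : NSeq → NSeq → Prop
  | nil : OrSplit A B .nil .nil
  | fcons (F : Formula) {Γ Δ : NSeq} : OrSplit A B Γ Δ → OrSplit A B (.fcons F Γ) (.fcons F Δ)
  | bcons {S S' Γ Δ : NSeq} : OrSplit A B S S' → OrSplit A B Γ Δ →
      OrSplit A B (.bcons S Γ) (.bcons S' Δ)
  | split {Γ Δ : NSeq} : OrSplit A B Γ Δ →
      OrSplit A B (.fcons (.or A B) Γ) (.fcons A (.fcons B Δ))

inductive OrSplitCtx (A B : Formula) : Ctx → Ctx → Prop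
  | hole : OrSplitCtx A B .hole .hole
  | fcons (F : Formula) {C C' : Ctx} : OrSplitCtx A B C C' →
      OrSplitCtx A B (.fcons F C) (.fcons F C')
  | scons {S S' : NSeq} {C C' : Ctx} : OrSplit A B S S' → OrSplitCtx A B C C' →
      OrSplitCtx A B (.scons S C) (.scons S' C')
  | binto {C C' : Ctx} {S S' : NSeq} : OrSplitCtx A B C C' → OrSplit A B S S' →
      OrSplitCtx A B (.binto C S) (.binto C' S')
  | split {C C' : Ctx} : OrSplitCtx A B C C' →
      OrSplitCtx A B (.fcons (.or A B) C) (.fcons A (.fcons B C'))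

section OrSplit

variable {A B : Formula}

theorem OrSplit.refl (A B : Formula) : ∀ Γ : NSeq, OrSplit A B Γ Γ
  | .nil => .nil
  | .fcons F Γ => .fcons F (OrSplit.refl A B Γ)
  | .bcons S Γ => .bcons (OrSplit.refl A B S) (OrSplit.refl A B Γ)

theorem OrSplitCtx.refl (A B : Formula) : ∀ C : Ctx, OrSplitCtx A B C C
  | .hole => .hole
  | .fcons F C => .fcons F (OrSplitCtx.refl A B C)
  | .scons S C => .scons (OrSplit.refl A B S) (OrSplitCtx.refl A B C)
  | .binto C S => .binto (OrSplitCtx.refl A B C) (OrSplit.refl A B S)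

theorem OrSplit.append {Γ Γ' Δ Δ' : NSeq} (hΓ : OrSplit A B Γ Γ') (hΔ : OrSplit A B Δ Δ') :
    OrSplit A B (Γ.append Δ) (Γ'.append Δ') := by
  induction hΓ with
  | nil => exact hΔ
  | fcons F _ ih => exact .fcons F ih
  | bcons hS _ _ ih => exact .bcons hS ih
  | split _ ih => exact .split ih

theorem OrSplitCtx.fill {C C' : Ctx} {K K' : NSeq} (hC : OrSplitCtx A B C C')
    (hK : OrSplit A B K K') : OrSplit A B (C.fill K) (C'.fill K') := by
  induction hC with
  | hole => exact hK
  | fcons F _ ih => exact .fcons F ih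
  | scons hS _ ih => exact .bcons hS ih
  | binto _ hS ih => exact .bcons ih hS
  | split _ ih => exact .split ih

theorem OrSplit.nestBox {Δs Δs' : List NSeq} {Θ Θ' : NSeq}
    (hΔs : List.Forall₂ (OrSplit A B) Δs Δs') (hΘ : OrSplit A B Θ Θ') :
    OrSplit A B (nestBox Δs Θ) (nestBox Δs' Θ') := by
  induction hΔs with
  | nil => exact .bcons hΘ .nil
  | cons hΔ _ ih => exact .bcons (hΔ.append ih) .nil

theorem OrSplit.exists_of_fill (C : Ctx) {K E : NSeq} (h : OrSplit A B (C.fill K) E) :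
    ∃ C' K', E = C'.fill K' ∧ OrSplitCtx A B C C' ∧ OrSplit A B K K' := by
  induction C generalizing E with
  | hole => exact ⟨.hole, E, rfl, .hole, h⟩
  | fcons F C ih =>
    rcases h with _ | ⟨_, h⟩ | _ | ⟨h⟩
    · obtain ⟨C', K', rfl, hC, hK⟩ := ih h
      exact ⟨.fcons F C', K', rfl, .fcons F hC, hK⟩
    · obtain ⟨C', K', rfl, hC, hK⟩ := ih h
      exact ⟨.fcons A (.fcons B C'), K', rfl, .split hC, hK⟩
  | scons S C ih =>
    obtain _ | _ | ⟨hS, h⟩ := h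
    obtain ⟨C', K', rfl, hC, hK⟩ := ih h
    exact ⟨.scons _ C', K', rfl, .scons hS hC, hK⟩
  | binto C S ih =>
    obtain _ | _ | ⟨h, hS⟩ := h
    obtain ⟨C', K', rfl, hC, hK⟩ := ih h
    exact ⟨.binto C' _, K', rfl, .binto hC hS, hK⟩

theorem OrSplit.exists_of_append (Γ : NSeq) {Δ E : NSeq} (h : OrSplit A B (Γ.append Δ) E) :
    ∃ Γ' Δ', E = Γ'.append Δ' ∧ OrSplit A B Γ Γ' ∧ OrSplit A B Δ Δ' := by
  induction Γ generalizing E with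
  | nil => exact ⟨.nil, E, rfl, .nil, h⟩
  | fcons F Γ ih =>
    rcases h with _ | ⟨_, h⟩ | _ | ⟨h⟩
    · obtain ⟨Γ', Δ', rfl, hΓ, hΔ⟩ := ih h
      exact ⟨.fcons F Γ', Δ', rfl, .fcons F hΓ, hΔ⟩
    · obtain ⟨Γ', Δ', rfl, hΓ, hΔ⟩ := ih h
      exact ⟨.fcons A (.fcons B Γ'), Δ', rfl, .split hΓ, hΔ⟩
  | bcons S Γ _ ih =>
    obtain _ | _ | ⟨hS, h⟩ := h
    obtain ⟨Γ', Δ', rfl, hΓ, hΔ⟩ := ih h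
    exact ⟨.bcons _ Γ', Δ', rfl, .bcons hS hΓ, hΔ⟩

theorem OrSplit.exists_of_nestBox (Δs : List NSeq) {Θ E : NSeq}
    (h : OrSplit A B (_root_.nestBox Δs Θ) E) :
    ∃ Δs' Θ', E = _root_.nestBox Δs' Θ' ∧ List.Forall₂ (OrSplit A B) Δs Δs' ∧ OrSplit A B Θ Θ' := by
  induction Δs generalizing E with
  | nil =>
    obtain _ | _ | ⟨hΘ, ⟨⟩⟩ := h
    exact ⟨[], _, rfl, .nil, hΘ⟩
  | cons Δ Δs ih =>
    obtain _ | _ | ⟨h, ⟨⟩⟩ := h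
    obtain ⟨Δ', Y', rfl, hΔ, hY⟩ := OrSplit.exists_of_append Δ h
    obtain ⟨Δs', Θ', rfl, hΔs, hΘ⟩ := ih hY
    exact ⟨Δ' :: Δs', Θ', rfl, .cons hΔ hΔs, hΘ⟩

theorem OrSplit.exists_of_fcons {P : Formula} {Γ E : NSeq} (h : OrSplit A B (.fcons P Γ) E) :
    ∃ P' Γ', E = P'.append Γ' ∧ OrSplit A B (.fcons P .nil) P' ∧ OrSplit A B Γ Γ' := by
  rcases h with _ | ⟨_, h⟩ | _ | ⟨h⟩
  · exact ⟨.fcons P .nil, _, rfl, .fcons P .nil, h⟩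
  · exact ⟨.fcons A (.fcons B .nil), _, rfl, .split .nil, h⟩

theorem OrSplit.exists_perm {G₀ G : NSeq} (hp : Perm G₀ G) {G' : NSeq} (h : OrSplit A B G G') :
    ∃ G₀', OrSplit A B G₀ G₀' ∧ Perm G₀' G' := by
  induction hp generalizing G' with
  | nil => cases h; exact ⟨.nil, .nil, .nil⟩
  | fcons P _ ih =>
    obtain ⟨P', Δ', rfl, hP, hΔ⟩ := h.exists_of_fcons
    obtain ⟨Γ', hΓ, hperm⟩ := ih hΔ
    exact ⟨P'.append Γ', hP.append hΓ, Perm.append_left P' hperm⟩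
  | bcons _ _ ihS ih =>
    obtain _ | _ | ⟨hS, hΔ⟩ := h
    obtain ⟨S', hS', hpS⟩ := ihS hS
    obtain ⟨Γ', hΓ, hperm⟩ := ih hΔ
    exact ⟨.bcons S' Γ', .bcons hS' hΓ, .bcons hpS hperm⟩
  | swapff P Q Γ =>
    obtain ⟨Q', E, rfl, hQ, h⟩ := h.exists_of_fcons
    obtain ⟨P', Γ', rfl, hP, hΓ⟩ := h.exists_of_fcons
    exact ⟨P'.append (Q'.append Γ'), hP.append (hQ.append hΓ), perm_append_left_comm P' Q' Γ'⟩
  | swapfb P S Γ =>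
    obtain _ | _ | ⟨hS, h⟩ := h
    obtain ⟨P', Γ', rfl, hP, hΓ⟩ := h.exists_of_fcons
    exact ⟨P'.append (.bcons _ Γ'), hP.append (.bcons hS hΓ),
      perm_append_left_comm P' (.bcons _ .nil) Γ'⟩
  | swapbf P S Γ =>
    obtain ⟨P', E, rfl, hP, h⟩ := h.exists_of_fcons
    obtain _ | _ | ⟨hS, hΓ⟩ := h
    exact ⟨.bcons _ (P'.append _), .bcons hS (hP.append hΓ),
      perm_append_left_comm (.bcons _ .nil) P' _⟩
  | swapbb S T Γ =>
    obtain _ | _ | ⟨hS, _ | _ | ⟨hT, hΓ⟩⟩ := h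
    exact ⟨.bcons _ (.bcons _ _), .bcons hT (.bcons hS hΓ), .swapbb _ _ _⟩
  | trans _ _ ih₁ ih₂ =>
    obtain ⟨G₁', h₁, hp₁⟩ := ih₂ h
    obtain ⟨G₀', h₀, hp₀⟩ := ih₁ h₁
    exact ⟨G₀', h₀, .trans hp₀ hp₁⟩

end OrSplit

section Prf

variable {Xk X4 : Set ℕ} {ρ : ℕ → Prop}

theorem Prf.succ {h : ℕ} {Γ : NSeq} (π : Prf Xk X4 ρ h Γ) : Prf Xk X4 ρ (h + 1) Γ := by
  induction π with
  | id Γ p h => exact .id Γ p (h + 1)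
  | orR Γ A B _ ih => exact .orR Γ A B ih
  | andR Γ A B _ _ ih₁ ih₂ => exact .andR Γ A B ih₁ ih₂
  | boxR Γ A _ ih => exact .boxR Γ A ih
  | diaR Γ A Δ _ ih => exact .diaR Γ A Δ ih
  | propk Γ A Δs Δn hn _ ih => exact .propk Γ A Δs Δn hn ih
  | prop4 Γ A Δs Δl hn _ ih => exact .prop4 Γ A Δs Δl hn ih
  | cut Γ A hA _ _ ih₁ ih₂ => exact .cut Γ A hA ih₁ ih₂
  | exch hp _ ih => exact .exch hp ih

theorem Prf.of_orSplit {A B : Formula} {h : ℕ} {G : NSeq} (π : Prf Xk X4 ρ h G) {G' : NSeq}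
    (hG : OrSplit A B G G') : Prf Xk X4 ρ h G' := by
  induction π generalizing G' with
  | id C p h =>
    obtain ⟨C', _, rfl, -, _ | ⟨_, _ | ⟨_, ⟨⟩⟩⟩⟩ := hG.exists_of_fill C
    exact .id C' p h
  | orR C A' B' _ ih =>
    obtain ⟨C', _, rfl, hC, _ | ⟨_, ⟨⟩⟩ | _ | ⟨⟨⟩⟩⟩ := hG.exists_of_fill C
    · exact .orR C' A' B' (ih (hC.fill (.fcons A' (.fcons B' .nil))))
    · exact (ih (hC.fill (.fcons A (.fcons B .nil)))).succ
  | andR C A' B' _ _ ih₁ ih₂ =>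
    obtain ⟨C', _, rfl, hC, _ | ⟨_, ⟨⟩⟩⟩ := hG.exists_of_fill C
    exact .andR C' A' B' (ih₁ (hC.fill (.fcons A' .nil))) (ih₂ (hC.fill (.fcons B' .nil)))
  | boxR C A' _ ih =>
    obtain ⟨C', _, rfl, hC, _ | ⟨_, ⟨⟩⟩⟩ := hG.exists_of_fill C
    exact .boxR C' A' (ih (hC.fill (.bcons (.fcons A' .nil) .nil)))
  | diaR C A' Δ _ ih =>
    obtain ⟨C', _, rfl, hC, _ | ⟨_, _ | _ | ⟨hΔ, ⟨⟩⟩⟩⟩ := hG.exists_of_fill C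
    exact .diaR C' A' _ (ih (hC.fill (.fcons A'.dia (.bcons (.fcons A' hΔ) .nil))))
  | propk C A' Δs Δn hn _ ih =>
    obtain ⟨C', _, rfl, hC, _ | ⟨_, hK⟩⟩ := hG.exists_of_fill C
    obtain ⟨Δs', Δn', rfl, hΔs, hΔn⟩ := hK.exists_of_nestBox Δs
    exact .propk C' A' Δs' Δn' (hΔs.length_eq ▸ hn)
      (ih (hC.fill (.fcons A'.dia (OrSplit.nestBox hΔs (.fcons A' hΔn)))))
  | prop4 C A' Δs Δl hn _ ih =>
    obtain ⟨C', _, rfl, hC, _ | ⟨_, hK⟩⟩ := hG.exists_of_fill C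
    obtain ⟨Δs', Δl', rfl, hΔs, hΔl⟩ := hK.exists_of_nestBox Δs
    exact .prop4 C' A' Δs' Δl' (hΔs.length_eq ▸ hn)
      (ih (hC.fill (.fcons A'.dia (OrSplit.nestBox hΔs (.fcons A'.dia hΔl)))))
  | cut C A' hA _ _ ih₁ ih₂ =>
    obtain ⟨C', _, rfl, hC, ⟨⟩⟩ := hG.exists_of_fill C
    exact .cut C' A' hA (ih₁ (hC.fill (.fcons A' .nil))) (ih₂ (hC.fill (.fcons A'.negf .nil)))
  | exch hp _ ih =>
    obtain ⟨G₀', hG₀, hp₀⟩ := hG.exists_perm hp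
    exact .exch hp₀ (ih hG₀)

end Prf

theorem orInv_admissible_general (X : Set ℕ) (Γ : Ctx) (A B : Formula)
    (h : ℕ) (π : Prf X ∅ cutAll h (Γ.fill (NSeq.fcons (.or A B) NSeq.nil))) :
    Prf X ∅ cutAll h (Γ.fill (NSeq.fcons A (NSeq.fcons B NSeq.nil))) :=
  π.of_orSplit ((OrSplitCtx.refl A B Γ).fill (.split .nil))

/-- `∨⁻¹` is height-preserving admissible in `nK + ♦ₖX + cut`. -/
theorem orInv_admissible (X : Set ℕ) (hX : X ⊆ {n : ℕ | 1 < n}) (Γ : Ctx) (A B : Formula)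
    (h : ℕ) (π : Prf X ∅ cutAll h (Γ.fill (NSeq.fcons (.or A B) NSeq.nil))) :
    Prf X ∅ cutAll h (Γ.fill (NSeq.fcons A (NSeq.fcons B NSeq.nil))) :=
  orInv_admissible_general X Γ A B h π
end

section
/- The inverse rule □⁻¹ is height-preserving and cut-rank preserving admissible in nK + ♦_{kX} + cut: if there is a proof π of Γ{□A}, then there is a proof π' of Γ{[A]} with h(π') ≤ h(π) and cut-rank r(π') ≤ r(π). -/
/-! Auxiliary development for box-inversion admissibility. -/

namespace BoxInvAux

open NSeq Formula

theorem permRefl : ∀ Γ : NSeq, NSeq.Perm Γ Γ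
  | .nil => .nil
  | .fcons A Γ => .fcons A (permRefl Γ)
  | .bcons B Γ => .bcons (permRefl B) (permRefl Γ)

/-- `BOcc A S T`: `T` is obtained from `S` by replacing one occurrence of the
formula `□A` (at any node of the nested sequent) by the boxed sequent `[A]`. -/
inductive BOcc (A : Formula) : NSeq → NSeq → Prop
  | here (Γ : NSeq) :
      BOcc A (.fcons (.box A) Γ) (.bcons (.fcons A .nil) Γ)
  | fcons (B : Formula) {S T : NSeq} : BOcc A S T → BOcc A (.fcons B S) (.fcons B T)
  | bhead {S T : NSeq} (Γ : NSeq) : BOcc A S T → BOcc A (.bcons S Γ) (.bcons T Γ)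
  | btail (Δ : NSeq) {S T : NSeq} : BOcc A S T → BOcc A (.bcons Δ S) (.bcons Δ T)

/-- Occurrences commute with hereditary permutations. -/
theorem perm_bocc {A : Formula} :
    ∀ {S S' : NSeq}, NSeq.Perm S S' → ∀ {T' : NSeq}, BOcc A S' T' →
      ∃ T, BOcc A S T ∧ NSeq.Perm T T' := by
  intro S S' hp
  induction hp with
  | nil => intro T' hT; cases hT
  | fcons B p ih =>
    intro T' hT
    cases hT with
    | here _ => exact ⟨_, .here _, .bcons (permRefl _) p⟩
    | fcons _ h0 =>
      obtain ⟨T1, o, q⟩ := ih h0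
      exact ⟨_, .fcons B o, .fcons B q⟩
  | bcons pB pΓ ihB ihΓ =>
    intro T' hT
    cases hT with
    | bhead _ h0 =>
      obtain ⟨T1, o, q⟩ := ihB h0
      exact ⟨_, .bhead _ o, .bcons q pΓ⟩
    | btail _ h0 =>
      obtain ⟨T1, o, q⟩ := ihΓ h0
      exact ⟨_, .btail _ o, .bcons pB q⟩
  | swapff A0 B0 Γ =>
    intro T' hT
    cases hT with
    | here _ => exact ⟨_, .fcons A0 (.here Γ), .swapfb A0 _ Γ⟩
    | fcons _ h0 =>
      cases h0 with
      | here _ => exact ⟨_, .here _, .swapbf B0 _ Γ⟩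
      | fcons _ h1 =>
        exact ⟨_, .fcons A0 (.fcons B0 h1), .swapff A0 B0 _⟩
  | swapfb A0 B Γ =>
    intro T' hT
    cases hT with
    | bhead _ h0 => exact ⟨_, .fcons A0 (.bhead Γ h0), .swapfb A0 _ Γ⟩
    | btail _ h0 =>
      cases h0 with
      | here _ => exact ⟨_, .here _, .swapbb _ B Γ⟩
      | fcons _ h1 => exact ⟨_, .fcons A0 (.btail B h1), .swapfb A0 B _⟩
  | swapbf A0 B Γ =>
    intro T' hT
    cases hT with
    | here _ => exact ⟨_, .btail B (.here Γ), .swapbb B _ Γ⟩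
    | fcons _ h0 =>
      cases h0 with
      | bhead _ h1 => exact ⟨_, .bhead _ h1, .swapbf A0 _ Γ⟩
      | btail _ h1 => exact ⟨_, .btail B (.fcons A0 h1), .swapbf A0 B _⟩
  | swapbb B C Γ =>
    intro T' hT
    cases hT with
    | bhead _ h0 => exact ⟨_, .btail B (.bhead Γ h0), .swapbb B _ Γ⟩
    | btail _ h0 =>
      cases h0 with
      | bhead _ h1 => exact ⟨_, .bhead _ (h1 : BOcc A B _), .swapbb _ C Γ⟩
      | btail _ h1 => exact ⟨_, .btail B (.btail C h1), .swapbb B C _⟩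
  | trans p q ihp ihq =>
    intro T' hT
    obtain ⟨T1, o1, q1⟩ := ihq hT
    obtain ⟨T2, o2, q2⟩ := ihp o1
    exact ⟨T2, o2, .trans q2 q1⟩

/-- Occurrences inside a context. -/
inductive COcc (A : Formula) : Ctx → Ctx → Prop
  | here (C : Ctx) : COcc A (.fcons (.box A) C) (.scons (.fcons A .nil) C)
  | fcons (B : Formula) {C C' : Ctx} : COcc A C C' → COcc A (.fcons B C) (.fcons B C')
  | sconsS {S T : NSeq} (C : Ctx) : BOcc A S T → COcc A (.scons S C) (.scons T C)
  | sconsC (S : NSeq) {C C' : Ctx} : COcc A C C' → COcc A (.scons S C) (.scons S C')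
  | bintoS {S T : NSeq} (C : Ctx) : BOcc A S T → COcc A (.binto C S) (.binto C T)
  | bintoC (S : NSeq) {C C' : Ctx} : COcc A C C' → COcc A (.binto C S) (.binto C' S)

theorem bocc_fill {A : Formula} (C : Ctx) {S T : NSeq} (h : BOcc A S T) :
    BOcc A (C.fill S) (C.fill T) := by
  induction C with
  | hole => exact h
  | fcons B C ih => exact .fcons B ih
  | scons S0 C ih => exact .btail S0 ih
  | binto C S0 ih => exact .bhead S0 ih

theorem fill_cocc {A : Formula} {C C' : Ctx} (h : COcc A C C') (U : NSeq) :
    BOcc A (C.fill U) (C'.fill U) := by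
  induction h with
  | here C => exact .here _
  | fcons B _ ih => exact .fcons B ih
  | sconsS C h0 => exact .bhead _ h0
  | sconsC S _ ih => exact .btail S ih
  | bintoS C h0 => exact .btail _ h0
  | bintoC S _ ih => exact .bhead _ ih

theorem bocc_fill_dec {A : Formula} :
    ∀ (C : Ctx) {S T : NSeq}, BOcc A (C.fill S) T →
      (∃ C', COcc A C C' ∧ T = C'.fill S) ∨ (∃ S', BOcc A S S' ∧ T = C.fill S') := by
  intro C
  induction C with
  | hole => intro S T hT; exact Or.inr ⟨T, hT, rfl⟩
  | fcons B C ih =>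
    intro S T hT
    cases hT with
    | here _ => exact Or.inl ⟨_, .here C, rfl⟩
    | fcons _ h0 =>
      rcases ih h0 with ⟨C', hC, rfl⟩ | ⟨S', hS, rfl⟩
      · exact Or.inl ⟨_, .fcons B hC, rfl⟩
      · exact Or.inr ⟨S', hS, rfl⟩
  | scons S0 C ih =>
    intro S T hT
    cases hT with
    | bhead _ h0 => exact Or.inl ⟨_, .sconsS C h0, rfl⟩
    | btail _ h0 =>
      rcases ih h0 with ⟨C', hC, rfl⟩ | ⟨S', hS, rfl⟩
      · exact Or.inl ⟨_, .sconsC S0 hC, rfl⟩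
      · exact Or.inr ⟨S', hS, rfl⟩
  | binto C S0 ih =>
    intro S T hT
    cases hT with
    | btail _ h0 => exact Or.inl ⟨_, .bintoS C h0, rfl⟩
    | bhead _ h0 =>
      rcases ih h0 with ⟨C', hC, rfl⟩ | ⟨S', hS, rfl⟩
      · exact Or.inl ⟨_, .bintoC S0 hC, rfl⟩
      · exact Or.inr ⟨S', hS, rfl⟩

theorem bocc_append_left {A : Formula} {S S' : NSeq} (h : BOcc A S S') (N : NSeq) :
    BOcc A (S.append N) (S'.append N) := by
  induction h with
  | here Γ => exact .here _
  | fcons B _ ih => exact .fcons B ih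
  | bhead Γ h0 => exact .bhead _ h0
  | btail Δ _ ih => exact .btail Δ ih

theorem bocc_append_right {A : Formula} (S : NSeq) {N N' : NSeq} (h : BOcc A N N') :
    BOcc A (S.append N) (S.append N') := by
  induction S with
  | nil => exact h
  | fcons B S ih => exact .fcons B ih
  | bcons B S _ ih => exact .btail B ih

theorem bocc_append_dec {A : Formula} :
    ∀ (S : NSeq) {N T : NSeq}, BOcc A (S.append N) T →
      (∃ S', BOcc A S S' ∧ T = S'.append N) ∨ (∃ N', BOcc A N N' ∧ T = S.append N') := by
  intro S
  induction S with
  | nil => intro N T hT; exact Or.inr ⟨T, hT, rfl⟩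
  | fcons B S ih =>
    intro N T hT
    cases hT with
    | here _ => exact Or.inl ⟨_, .here S, rfl⟩
    | fcons _ h0 =>
      rcases ih h0 with ⟨S', hS, rfl⟩ | ⟨N', hN, rfl⟩
      · exact Or.inl ⟨_, .fcons B hS, rfl⟩
      · exact Or.inr ⟨N', hN, rfl⟩
  | bcons B S _ ih =>
    intro N T hT
    cases hT with
    | bhead _ h0 => exact Or.inl ⟨_, .bhead S h0, rfl⟩
    | btail _ h0 =>
      rcases ih h0 with ⟨S', hS, rfl⟩ | ⟨N', hN, rfl⟩
      · exact Or.inl ⟨_, .btail B hS, rfl⟩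
      · exact Or.inr ⟨N', hN, rfl⟩

/-- Occurrence in an element of a list of nested sequents. -/
inductive LOcc (A : Formula) : List NSeq → List NSeq → Prop
  | head {Δ Δ' : NSeq} (rest : List NSeq) : BOcc A Δ Δ' → LOcc A (Δ :: rest) (Δ' :: rest)
  | tail (Δ : NSeq) {rest rest' : List NSeq} : LOcc A rest rest' → LOcc A (Δ :: rest) (Δ :: rest')

theorem locc_length {A : Formula} {l l' : List NSeq} (h : LOcc A l l') :
    l.length = l'.length := by
  induction h with
  | head rest _ => rfl
  | tail Δ _ ih => simp [ih]

theorem locc_nest {A : Formula} {Δs Δs' : List NSeq} (h : LOcc A Δs Δs') (Θ : NSeq) :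
    BOcc A (nestBox Δs Θ) (nestBox Δs' Θ) := by
  induction h with
  | head rest h0 => exact .bhead _ (bocc_append_left h0 _)
  | tail Δ _ ih => exact .bhead _ (bocc_append_right Δ ih)

theorem bocc_nest_theta {A : Formula} (Δs : List NSeq) {Θ Θ' : NSeq} (h : BOcc A Θ Θ') :
    BOcc A (nestBox Δs Θ) (nestBox Δs Θ') := by
  induction Δs with
  | nil => exact .bhead _ h
  | cons Δ rest ih => exact .bhead _ (bocc_append_right Δ ih)

theorem bocc_nest_dec {A : Formula} :
    ∀ (Δs : List NSeq) {Θ T : NSeq}, BOcc A (nestBox Δs Θ) T →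
      (∃ Δs', LOcc A Δs Δs' ∧ T = nestBox Δs' Θ) ∨
      (∃ Θ', BOcc A Θ Θ' ∧ T = nestBox Δs Θ') := by
  intro Δs
  induction Δs with
  | nil =>
    intro Θ T hT
    cases hT with
    | bhead _ h0 => exact Or.inr ⟨_, h0, rfl⟩
    | btail _ h0 => cases h0
  | cons Δ rest ih =>
    intro Θ T hT
    cases hT with
    | btail _ h0 => cases h0
    | bhead _ h0 =>
      rcases bocc_append_dec Δ h0 with ⟨Δ', hΔ, rfl⟩ | ⟨N', hN, rfl⟩
      · exact Or.inl ⟨Δ' :: rest, .head rest hΔ, rfl⟩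
      · rcases ih hN with ⟨rest', hl, rfl⟩ | ⟨Θ', hΘ, rfl⟩
        · exact Or.inl ⟨Δ :: rest', .tail Δ hl, rfl⟩
        · exact Or.inr ⟨Θ', hΘ, rfl⟩

theorem prf_succ {Xk X4 : Set ℕ} {ρ : ℕ → Prop} :
    ∀ {h : ℕ} {Γ : NSeq}, Prf Xk X4 ρ h Γ → Prf Xk X4 ρ (h + 1) Γ := by
  intro h Γ π
  induction π with
  | id Γ p h => exact .id Γ p (h + 1)
  | orR Γ A B _ ih => exact .orR Γ A B ih
  | andR Γ A B _ _ ih1 ih2 => exact .andR Γ A B ih1 ih2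
  | boxR Γ A _ ih => exact .boxR Γ A ih
  | diaR Γ A Δ _ ih => exact .diaR Γ A Δ ih
  | propk Γ A Δs Δn hn _ ih => exact .propk Γ A Δs Δn hn ih
  | prop4 Γ A Δs Δl hn _ ih => exact .prop4 Γ A Δs Δl hn ih
  | cut Γ A hA _ _ ih1 ih2 => exact .cut Γ A hA ih1 ih2
  | exch hperm _ ih => exact .exch hperm ih

/-- Main lemma: box inversion at an arbitrary occurrence is height- and
rank-preserving admissible (in the absence of `♦₄` rules). -/
theorem bocc_admissible {X : Set ℕ} {ρ : ℕ → Prop} {A : Formula} :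
    ∀ {h : ℕ} {S : NSeq}, Prf X ∅ ρ h S → ∀ {T : NSeq}, BOcc A S T →
      Prf X ∅ ρ h T := by
  intro h S π
  induction π with
  | id Γc p hh =>
    intro T hT
    rcases bocc_fill_dec Γc hT with ⟨C', _, rfl⟩ | ⟨S', hS, rfl⟩
    · exact .id C' p hh
    · cases hS with
      | fcons _ h0 =>
        cases h0 with
        | fcons _ h1 => cases h1
  | orR Γc A' B' _ ih =>
    intro T hT
    rcases bocc_fill_dec Γc hT with ⟨C', hC, rfl⟩ | ⟨S', hS, rfl⟩
    · exact .orR C' A' B' (ih (fill_cocc hC _))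
    · cases hS with
      | fcons _ h0 => cases h0
  | andR Γc A' B' _ _ ih1 ih2 =>
    intro T hT
    rcases bocc_fill_dec Γc hT with ⟨C', hC, rfl⟩ | ⟨S', hS, rfl⟩
    · exact .andR C' A' B' (ih1 (fill_cocc hC _)) (ih2 (fill_cocc hC _))
    · cases hS with
      | fcons _ h0 => cases h0
  | boxR Γc A' prem ih =>
    intro T hT
    rcases bocc_fill_dec Γc hT with ⟨C', hC, rfl⟩ | ⟨S', hS, rfl⟩
    · exact .boxR C' A' (ih (fill_cocc hC _))
    · cases hS with
      | here _ => exact prf_succ prem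
      | fcons _ h0 => cases h0
  | diaR Γc A' Δ _ ih =>
    intro T hT
    rcases bocc_fill_dec Γc hT with ⟨C', hC, rfl⟩ | ⟨S', hS, rfl⟩
    · exact .diaR C' A' Δ (ih (fill_cocc hC _))
    · cases hS with
      | fcons _ h0 =>
        cases h0 with
        | bhead _ h1 =>
          exact .diaR Γc A' _ (ih (bocc_fill Γc (.fcons _ (.bhead _ (.fcons A' h1)))))
        | btail _ h1 => cases h1
  | propk Γc A' Δs Δn hn _ ih =>
    intro T hT
    rcases bocc_fill_dec Γc hT with ⟨C', hC, rfl⟩ | ⟨S', hS, rfl⟩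
    · exact .propk C' A' Δs Δn hn (ih (fill_cocc hC _))
    · cases hS with
      | fcons _ h0 =>
        rcases bocc_nest_dec Δs h0 with ⟨Δs', hl, rfl⟩ | ⟨Δn', hΔn, rfl⟩
        · refine .propk Γc A' Δs' Δn ?_ (ih (bocc_fill Γc (.fcons _ (locc_nest hl _))))
          rwa [← locc_length hl]
        · exact .propk Γc A' Δs Δn' hn
            (ih (bocc_fill Γc (.fcons _ (bocc_nest_theta Δs (.fcons A' hΔn)))))
  | prop4 Γc A' Δs Δl hn _ _ => exact absurd hn (Set.notMem_empty _)
  | cut Γc A' hA _ _ ih1 ih2 =>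
    intro T hT
    rcases bocc_fill_dec Γc hT with ⟨C', hC, rfl⟩ | ⟨S', hS, rfl⟩
    · exact .cut C' A' hA (ih1 (fill_cocc hC _)) (ih2 (fill_cocc hC _))
    · cases hS
  | exch hperm _ ih =>
    intro T hT
    obtain ⟨T0, o, q⟩ := perm_bocc hperm hT
    exact .exch q (ih o)

end BoxInvAux

/-- `□⁻¹` is height-preserving and cut-rank preserving admissible in
`nK + ♦ₖX + cut`: for any cut-rank restriction `ρ`, a proof of `Γ{□A}` of
height `≤ h` yields a proof of `Γ{[A]}` of height `≤ h` within the same rank. -/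
theorem boxInv_admissible (X : Set ℕ) (hX : X ⊆ {n : ℕ | 1 < n}) (Γ : Ctx) (A : Formula)
    (ρ : ℕ → Prop) (h : ℕ)
    (π : Prf X ∅ ρ h (Γ.fill (NSeq.fcons (.box A) NSeq.nil))) :
    Prf X ∅ ρ h (Γ.fill (NSeq.bcons (NSeq.fcons A NSeq.nil) NSeq.nil)) :=
  BoxInvAux.bocc_admissible π (BoxInvAux.bocc_fill Γ (BoxInvAux.BOcc.here NSeq.nil))
end

section
/- The simplified modal structural rule ⊠'_{kn} (from Γ{[Δ]} infer Γ{[…[Δ]…]} where the context hole is pushed to depth n) is cut-rank preserving admissible in nK + ♦_{kX̂} + cut, where X̂ is the completion of X. -/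
/-! ### Auxiliary development for the admissibility proof -/

section Aux

theorem perm_refl : ∀ Γ : NSeq, NSeq.Perm Γ Γ
  | .nil => .nil
  | .fcons A Γ => .fcons A (perm_refl Γ)
  | .bcons B Γ => .bcons (perm_refl B) (perm_refl Γ)

theorem iterBox_add (a b : ℕ) (Δ : NSeq) : iterBox a (iterBox b Δ) = iterBox (a + b) Δ := by
  induction a with
  | zero => rw [Nat.zero_add]; rfl
  | succ a ih =>
    have e : a + 1 + b = (a + b) + 1 := by omega
    rw [e]
    show NSeq.bcons (iterBox a (iterBox b Δ)) NSeq.nil = _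
    rw [ih]
    rfl

theorem iterBox_bcons (c : ℕ) (X : NSeq) :
    NSeq.bcons (iterBox c X) NSeq.nil = iterBox c (NSeq.bcons X NSeq.nil) := by
  have h1 : NSeq.bcons X NSeq.nil = iterBox 1 X := rfl
  rw [h1, iterBox_add]
  rfl

theorem perm_iterBox (c : ℕ) {B B' : NSeq} (h : NSeq.Perm B B') :
    NSeq.Perm (iterBox c B) (iterBox c B') := by
  induction c with
  | zero => exact h
  | succ c ih => exact .bcons ih .nil

/-- Expansion relation: `Ex c Γ Γ'` iff `Γ'` is obtained from `Γ` by wrapping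
some boxes in `c` extra boxes (hereditarily). -/
inductive Ex (c : ℕ) : NSeq → NSeq → Prop
  | nil : Ex c .nil .nil
  | fcons (A : Formula) {Γ Γ' : NSeq} : Ex c Γ Γ' → Ex c (.fcons A Γ) (.fcons A Γ')
  | keep {B B' Γ Γ' : NSeq} : Ex c B B' → Ex c Γ Γ' → Ex c (.bcons B Γ) (.bcons B' Γ')
  | expand {B B' Γ Γ' : NSeq} : Ex c B B' → Ex c Γ Γ' →
      Ex c (.bcons B Γ) (.bcons (iterBox c B') Γ')

theorem ex_refl (c : ℕ) : ∀ Γ : NSeq, Ex c Γ Γ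
  | .nil => .nil
  | .fcons A Γ => .fcons A (ex_refl c Γ)
  | .bcons B Γ => .keep (ex_refl c B) (ex_refl c Γ)

theorem ex_append {c : ℕ} : ∀ (Δ : NSeq) {Δ' R R' : NSeq}, Ex c Δ Δ' → Ex c R R' →
    Ex c (Δ.append R) (Δ'.append R') := by
  intro Δ
  induction Δ with
  | nil => intro Δ' R R' h hR; cases h; exact hR
  | fcons A Δ ih =>
    intro Δ' R R' h hR
    cases h with
    | fcons _ h0 => exact .fcons A (ih h0 hR)
  | bcons B Δ ihB ih =>
    intro Δ' R R' h hR
    cases h with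
    | keep hB h0 => exact .keep hB (ih h0 hR)
    | expand hB h0 => exact .expand hB (ih h0 hR)

theorem ex_append_inv {c : ℕ} : ∀ (Δ R T : NSeq), Ex c (Δ.append R) T →
    ∃ Δ' R', T = Δ'.append R' ∧ Ex c Δ Δ' ∧ Ex c R R' := by
  intro Δ
  induction Δ with
  | nil => intro R T h; exact ⟨.nil, T, rfl, .nil, h⟩
  | fcons A Δ ih =>
    intro R T h
    cases h with
    | fcons _ h0 =>
      obtain ⟨Δ', R', rfl, h1, h2⟩ := ih _ _ h0
      exact ⟨.fcons A Δ', R', rfl, .fcons A h1, h2⟩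
  | bcons B Δ ihB ih =>
    intro R T h
    cases h with
    | keep hB h0 =>
      obtain ⟨Δ', R', rfl, h1, h2⟩ := ih _ _ h0
      exact ⟨.bcons _ Δ', R', rfl, .keep hB h1, h2⟩
    | expand hB h0 =>
      obtain ⟨Δ', R', rfl, h1, h2⟩ := ih _ _ h0
      exact ⟨.bcons _ Δ', R', rfl, .expand hB h1, h2⟩

theorem ex_fill {c : ℕ} (C : Ctx) {T T' : NSeq} (h : Ex c T T') :
    Ex c (C.fill T) (C.fill T') := by
  induction C with
  | hole => exact h
  | fcons A C ih => exact .fcons A ih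
  | scons S C ih => exact .keep (ex_refl c S) ih
  | binto C S ih => exact .keep ih (ex_refl c S)

/-- Iterated `binto _ nil` context. -/
def ctxIter : ℕ → Ctx → Ctx
  | 0, C => C
  | k+1, C => .binto (ctxIter k C) .nil

theorem ctxIter_fill (k : ℕ) (C : Ctx) (S : NSeq) :
    (ctxIter k C).fill S = iterBox k (C.fill S) := by
  induction k with
  | zero => rfl
  | succ k ih => show NSeq.bcons ((ctxIter k C).fill S) NSeq.nil = _; rw [ih]; rfl

theorem nestBox_replicate (k : ℕ) (L : List NSeq) (Θ : NSeq) :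
    nestBox (List.replicate k NSeq.nil ++ L) Θ = iterBox k (nestBox L Θ) := by
  induction k with
  | zero => rfl
  | succ k ih =>
    show NSeq.bcons (NSeq.nil.append (nestBox (List.replicate k NSeq.nil ++ L) Θ)) NSeq.nil = _
    show NSeq.bcons (nestBox (List.replicate k NSeq.nil ++ L) Θ) NSeq.nil = _
    rw [ih, iterBox_bcons]
    have h1 : NSeq.bcons (nestBox L Θ) NSeq.nil = iterBox 1 (nestBox L Θ) := rfl
    rw [h1, iterBox_add]

theorem nestBox_replicate_nil (k : ℕ) (Θ : NSeq) :
    nestBox (List.replicate k NSeq.nil) Θ = iterBox (k+1) Θ := by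
  have := nestBox_replicate k [] Θ
  simp at this
  rw [this]
  have : nestBox [] Θ = iterBox 1 Θ := rfl
  rw [this, iterBox_add]

/-- Decomposing `Ex` along a context. -/
theorem fillE {c : ℕ} : ∀ (C : Ctx) (S Γ' : NSeq), Ex c (C.fill S) Γ' →
    ∃ (C' : Ctx) (S' : NSeq), Γ' = C'.fill S' ∧ Ex c S S' ∧
      ∀ T T', Ex c T T' → Ex c (C.fill T) (C'.fill T') := by
  intro C
  induction C with
  | hole => intro S Γ' hE; exact ⟨.hole, Γ', rfl, hE, fun _ _ h => h⟩
  | fcons A C ih =>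
    intro S Γ' hE
    cases hE with
    | fcons _ h =>
      obtain ⟨C', S', rfl, hS, Tr⟩ := ih _ _ h
      exact ⟨.fcons A C', S', rfl, hS, fun T T' ht => .fcons A (Tr T T' ht)⟩
  | scons B C ih =>
    intro S Γ' hE
    cases hE with
    | keep hB h =>
      obtain ⟨C', S', rfl, hS, Tr⟩ := ih _ _ h
      exact ⟨.scons _ C', S', rfl, hS, fun T T' ht => .keep hB (Tr T T' ht)⟩
    | expand hB h =>
      obtain ⟨C', S', rfl, hS, Tr⟩ := ih _ _ h
      exact ⟨.scons (iterBox c _) C', S', rfl, hS, fun T T' ht => .expand hB (Tr T T' ht)⟩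
  | binto C B ih =>
    intro S Γ' hE
    cases hE with
    | keep h hB =>
      obtain ⟨C', S', rfl, hS, Tr⟩ := ih _ _ h
      exact ⟨.binto C' _, S', rfl, hS, fun T T' ht => .keep (Tr T T' ht) hB⟩
    | expand h hB =>
      obtain ⟨C', S', rfl, hS, Tr⟩ := ih _ _ h
      rename_i B2
      refine ⟨.binto (ctxIter c C') B2, S', ?_, hS, ?_⟩
      · show _ = NSeq.bcons ((ctxIter c C').fill S') _
        rw [ctxIter_fill]
      · intro T T' ht
        have h2 := Ex.expand (Tr T T' ht) hB
        show Ex c _ (NSeq.bcons ((ctxIter c C').fill T') _)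
        rw [ctxIter_fill]
        exact h2

/-- Decomposing `Ex` along a `nestBox` chain. -/
theorem nest_inv {c : ℕ} : ∀ (L : List NSeq) (Θ T : NSeq), Ex c (nestBox L Θ) T →
    ∃ (L' : List NSeq) (Θ' : NSeq) (k : ℕ), T = nestBox L' Θ' ∧ Ex c Θ Θ' ∧
      L'.length = L.length + k * c ∧
      ∀ Θ₂ Θ₂', Ex c Θ₂ Θ₂' → Ex c (nestBox L Θ₂) (nestBox L' Θ₂') := by
  intro L
  induction L with
  | nil =>
    intro Θ T hE
    cases hE with
    | keep hΘ hnil =>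
      cases hnil
      exact ⟨[], _, 0, rfl, hΘ, by simp, fun _ _ h => .keep h .nil⟩
    | expand hΘ hnil =>
      cases hnil
      refine ⟨List.replicate c .nil, _, 1, ?_, hΘ, by simp, ?_⟩
      · rw [nestBox_replicate_nil]; rfl
      · intro Θ₂ Θ₂' h
        rw [nestBox_replicate_nil]
        exact Ex.expand h .nil
  | cons Δ L ih =>
    intro Θ T hE
    cases hE with
    | keep hin hnil =>
      cases hnil
      obtain ⟨Δ', R', rfl, hΔ, hR⟩ := ex_append_inv _ _ _ hin
      obtain ⟨L', Θ', k, rfl, hΘ, hlen, Tr⟩ := ih _ _ hR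
      refine ⟨Δ' :: L', Θ', k, rfl, hΘ, by simp [hlen]; omega, ?_⟩
      intro Θ₂ Θ₂' h
      exact .keep (ex_append _ hΔ (Tr _ _ h)) .nil
    | expand hin hnil =>
      cases hnil
      obtain ⟨Δ', R', rfl, hΔ, hR⟩ := ex_append_inv _ _ _ hin
      obtain ⟨L', Θ', k, rfl, hΘ, hlen, Tr⟩ := ih _ _ hR
      refine ⟨List.replicate c .nil ++ Δ' :: L', Θ', k+1, ?_, hΘ, ?_, ?_⟩
      · rw [nestBox_replicate, iterBox_bcons]
        rfl
      · simp [hlen]; ring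
      · intro Θ₂ Θ₂' h
        rw [nestBox_replicate]
        have e : nestBox (Δ' :: L') Θ₂' = NSeq.bcons (Δ'.append (nestBox L' Θ₂')) NSeq.nil := rfl
        rw [e, ← iterBox_bcons]
        exact Ex.expand (ex_append _ hΔ (Tr _ _ h)) .nil

/-- Pulling `Ex` back along a permutation. -/
theorem permE {c : ℕ} : ∀ {Γ₀ Γ : NSeq}, NSeq.Perm Γ₀ Γ → ∀ Γ', Ex c Γ Γ' →
    ∃ Γ₀', Ex c Γ₀ Γ₀' ∧ NSeq.Perm Γ₀' Γ' := by
  intro Γ₀ Γ hp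
  induction hp with
  | nil => intro Γ' hE; exact ⟨Γ', hE, perm_refl _⟩
  | fcons A _ ih =>
    intro Γ' hE
    cases hE with
    | fcons _ h =>
      obtain ⟨Γ₁, h1, h2⟩ := ih _ h
      exact ⟨.fcons A Γ₁, .fcons A h1, .fcons A h2⟩
  | bcons _ _ ihB ihΓ =>
    intro Γ' hE
    cases hE with
    | keep hB h =>
      obtain ⟨B₀, hB0, pB0⟩ := ihB _ hB
      obtain ⟨Γ₁, h0, p0⟩ := ihΓ _ h
      exact ⟨.bcons B₀ Γ₁, .keep hB0 h0, .bcons pB0 p0⟩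
    | expand hB h =>
      obtain ⟨B₀, hB0, pB0⟩ := ihB _ hB
      obtain ⟨Γ₁, h0, p0⟩ := ihΓ _ h
      exact ⟨.bcons (iterBox c B₀) Γ₁, .expand hB0 h0, .bcons (perm_iterBox c pB0) p0⟩
  | swapff A B Γ =>
    intro Γ' hE
    cases hE with
    | fcons _ h1 =>
      cases h1 with
      | fcons _ h2 =>
        exact ⟨_, .fcons A (.fcons B h2), .swapff A B _⟩
  | swapfb A B Γ =>
    intro Γ' hE
    cases hE with
    | keep hB h =>
      cases h with
      | fcons _ h2 =>
        exact ⟨_, .fcons A (.keep hB h2), .swapfb A _ _⟩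
    | expand hB h =>
      cases h with
      | fcons _ h2 =>
        exact ⟨_, .fcons A (.expand hB h2), .swapfb A _ _⟩
  | swapbf A B Γ =>
    intro Γ' hE
    cases hE with
    | fcons _ h =>
      cases h with
      | keep hB h2 =>
        exact ⟨_, .keep hB (.fcons A h2), .swapbf A _ _⟩
      | expand hB h2 =>
        exact ⟨_, .expand hB (.fcons A h2), .swapbf A _ _⟩
  | swapbb B C Γ =>
    intro Γ' hE
    cases hE with
    | keep hC h =>
      cases h with
      | keep hB h2 => exact ⟨_, .keep hB (.keep hC h2), .swapbb _ _ _⟩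
      | expand hB h2 => exact ⟨_, .expand hB (.keep hC h2), .swapbb _ _ _⟩
    | expand hC h =>
      cases h with
      | keep hB h2 => exact ⟨_, .keep hB (.expand hC h2), .swapbb _ _ _⟩
      | expand hB h2 => exact ⟨_, .expand hB (.expand hC h2), .swapbb _ _ _⟩
  | trans _ _ ih1 ih2 =>
    intro Γ' hE
    obtain ⟨Δ', hD, pD⟩ := ih2 _ hE
    obtain ⟨Γ₁, hG, pG⟩ := ih1 _ hD
    exact ⟨Γ₁, hG, .trans pG pD⟩

theorem add_mul_mem {Xk : Set ℕ} (hcl : ∀ m k, m ∈ Xk → k ∈ Xk → m + k - 1 ∈ Xk)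
    {c : ℕ} (hc : c + 1 ∈ Xk) {m : ℕ} (hm : m ∈ Xk) (k : ℕ) : m + k * c ∈ Xk := by
  induction k with
  | zero => simpa using hm
  | succ k ih =>
    have h2 := hcl _ _ ih hc
    have e : m + k * c + (c + 1) - 1 = m + (k + 1) * c := by ring_nf; omega
    rwa [e] at h2

/-- Main lemma: `Ex`-expansion is height-preserving admissible. -/
theorem main {Xk : Set ℕ} {ρ : ℕ → Prop} {c : ℕ}
    (hcl : ∀ m k, m ∈ Xk → k ∈ Xk → m + k - 1 ∈ Xk) (hc : c + 1 ∈ Xk)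
    {h : ℕ} {Γ : NSeq} (hp : Prf Xk ∅ ρ h Γ) :
    ∀ Γ', Ex c Γ Γ' → Prf Xk ∅ ρ h Γ' := by
  induction hp with
  | id Γc p h =>
    intro Γ' hE
    obtain ⟨C', S', rfl, hS, _⟩ := fillE _ _ _ hE
    cases hS with
    | fcons _ h1 => cases h1 with
      | fcons _ h2 => cases h2; exact .id C' p h
  | orR Γc A B _ ih =>
    intro Γ' hE
    obtain ⟨C', S', rfl, hS, Tr⟩ := fillE _ _ _ hE
    cases hS with
    | fcons _ h1 =>
      cases h1
      exact .orR C' A B (ih _ (Tr _ _ (ex_refl _ _)))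
  | andR Γc A B _ _ ih1 ih2 =>
    intro Γ' hE
    obtain ⟨C', S', rfl, hS, Tr⟩ := fillE _ _ _ hE
    cases hS with
    | fcons _ h1 =>
      cases h1
      exact .andR C' A B (ih1 _ (Tr _ _ (ex_refl _ _))) (ih2 _ (Tr _ _ (ex_refl _ _)))
  | boxR Γc A _ ih =>
    intro Γ' hE
    obtain ⟨C', S', rfl, hS, Tr⟩ := fillE _ _ _ hE
    cases hS with
    | fcons _ h1 =>
      cases h1
      exact .boxR C' A (ih _ (Tr _ _ (ex_refl _ _)))
  | diaR Γc A Δ _ ih =>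
    intro Γ' hE
    obtain ⟨C', S', rfl, hS, Tr⟩ := fillE _ _ _ hE
    cases hS with
    | fcons _ h1 =>
      cases h1 with
      | keep hΔ h2 =>
        cases h2
        exact .diaR C' A _ (ih _ (Tr _ _ (.fcons _ (.keep (.fcons A hΔ) .nil))))
      | expand hΔ h2 =>
        cases h2
        rename_i Δ'
        have e1 : NSeq.bcons (iterBox c Δ') NSeq.nil =
            nestBox (List.replicate c NSeq.nil) Δ' := by
          rw [nestBox_replicate_nil]; rfl
        rw [e1]
        have hlen : (List.replicate c NSeq.nil).length + 1 ∈ Xk := by simpa using hc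
        refine .propk C' A _ _ hlen ?_
        have e2 : nestBox (List.replicate c NSeq.nil) (NSeq.fcons A Δ') =
            NSeq.bcons (iterBox c (NSeq.fcons A Δ')) NSeq.nil := by
          rw [nestBox_replicate_nil]; rfl
        rw [e2]
        exact ih _ (Tr _ _ (.fcons _ (.expand (.fcons A hΔ) .nil)))
  | propk Γc A Δs Δn hn _ ih =>
    intro Γ' hE
    obtain ⟨C', S', rfl, hS, Tr⟩ := fillE _ _ _ hE
    cases hS with
    | fcons _ h1 =>
      obtain ⟨L', Θ', k, rfl, hΘ, hlen, Tr2⟩ := nest_inv _ _ _ h1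
      have hmem : L'.length + 1 ∈ Xk := by
        have : L'.length + 1 = (Δs.length + 1) + k * c := by omega
        rw [this]
        exact add_mul_mem hcl hc hn k
      refine .propk C' A L' Θ' hmem ?_
      exact ih _ (Tr _ _ (.fcons _ (Tr2 _ _ (.fcons A hΘ))))
  | prop4 Γc A Δs Δl hn _ _ =>
    exact absurd hn (Set.notMem_empty _)
  | cut Γc A hA _ _ ih1 ih2 =>
    intro Γ' hE
    obtain ⟨C', S', rfl, hS, Tr⟩ := fillE _ _ _ hE
    cases hS
    exact .cut C' A hA (ih1 _ (Tr _ _ (ex_refl _ _))) (ih2 _ (Tr _ _ (ex_refl _ _)))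
  | exch p _ ih =>
    intro Γ' hE
    obtain ⟨Γ₀', hEx0, hperm⟩ := permE p _ hE
    exact .exch hperm (ih _ hEx0)

theorem compStep_mono (X : Set ℕ) : ∀ p q, p ≤ q → compStep X p ⊆ compStep X q := by
  intro p q hpq
  induction q with
  | zero => have : p = 0 := by omega
            subst this; exact fun _ h => h
  | succ q ih =>
    rcases Nat.lt_or_ge p (q+1) with h | h
    · intro x hx
      exact Or.inl (ih (by omega) hx)
    · have : p = q + 1 := by omega
      subst this; exact fun _ h => h

theorem subset_completion (X : Set ℕ) : X ⊆ completion X := by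
  intro x hx
  exact Set.mem_iUnion.mpr ⟨0, hx⟩

theorem completion_closed (X : Set ℕ) :
    ∀ m k, m ∈ completion X → k ∈ completion X → m + k - 1 ∈ completion X := by
  intro m k hm hk
  obtain ⟨p, hp⟩ := Set.mem_iUnion.mp hm
  obtain ⟨q, hq⟩ := Set.mem_iUnion.mp hk
  refine Set.mem_iUnion.mpr ⟨max p q + 1, ?_⟩
  exact Or.inr ⟨m, k, compStep_mono X p _ (le_max_left p q) hp,
    compStep_mono X q _ (le_max_right p q) hq, rfl⟩

end Aux


/-- The simplified modal structural rule `⊠'ₖₙ` (from `Γ{[Δ]}` infer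
`Γ{[…[Δ]…]}` with `n` nested boxes) is cut-rank preserving admissible in
`nK + ♦ₖX̂ + cut`. -/
theorem boxtimes'_admissible (X : Set ℕ) (hX : X ⊆ {n : ℕ | 1 < n}) (n : ℕ) (hn : n ∈ X)
    (ρ : ℕ → Prop) (Γ : Ctx) (Δ : NSeq)
    (hp : Provable (completion X) ∅ ρ (Γ.fill (iterBox 1 Δ))) :
    Provable (completion X) ∅ ρ (Γ.fill (iterBox n Δ)) := by
  obtain ⟨h, hp⟩ := hp
  have hn1 : 1 < n := hX hn
  have hcl := completion_closed X
  have hc : (n - 1) + 1 ∈ completion X := by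
    have e : n - 1 + 1 = n := by omega
    rw [e]
    exact subset_completion X hn
  refine ⟨h, main hcl hc hp _ ?_⟩
  have e2 : iterBox n Δ = NSeq.bcons (iterBox (n-1) Δ) NSeq.nil := by
    conv_lhs => rw [show n = (n-1)+1 by omega]
    rfl
  rw [e2]
  exact ex_fill Γ (Ex.expand (ex_refl _ Δ) Ex.nil)
end
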